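/- Let T₁, T₂ be a nice pair of non-crossing spanning trees on a convex point set and let A be a τ-extremal side of a chord e of T₁, for τ > 2. Then A contains at most (2/τ)·k_A bad holes with respect to T₂. -/

import Mathlib

open Finset

noncomputable section
attribute [local instance] Classical.propDecidable

/-- The successor of `i` in the cyclic order on `Fin n`. -/
def nextIdx {n : ℕ} (i : Fin n) : Fin n := ⟨(i.val + 1) % n, Nat.mod_lt _ i.pos⟩

/-- `x` lies strictly between `a` and `b` in the cyclic order on `Fin n`
(going forwards from `a` to `b`). -/
def CBtw {n : ℕ} (a x b : Fin n) : Prop :=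
  0 < (x - a).val ∧ (x - a).val < (b - a).val

/-- Endpoints `a,b` and `c,d` interleave in the cyclic order:
exactly one of `c`, `d` lies strictly between `a` and `b`. -/
def CrossPair {n : ℕ} (a b c d : Fin n) : Prop :=
  Xor' (CBtw a c b) (CBtw a d b)

/-- Two chords of the convex polygon on `n` points (labeled in cyclic order)
cross in their interiors; combinatorially their endpoints interleave. -/
def Crosses {n : ℕ} (e f : Sym2 (Fin n)) : Prop :=
  ∃ a b c d : Fin n, e = s(a, b) ∧ f = s(c, d) ∧
    a ≠ b ∧ a ≠ c ∧ a ≠ d ∧ b ≠ c ∧ b ≠ d ∧ c ≠ d ∧ CrossPair a b c d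

/-- A border edge joins two consecutive points of the convex hull. -/
def IsBorderEdge {n : ℕ} (e : Sym2 (Fin n)) : Prop :=
  ∃ i : Fin n, e = s(i, nextIdx i)

/-- `T` is a non-crossing spanning tree on the `n` points (in convex position,
labeled cyclically by `Fin n`): loopless, `n - 1` edges, connected, and no two
edges cross. -/
def IsNCST (n : ℕ) (T : Finset (Sym2 (Fin n))) : Prop :=
  (∀ e ∈ T, ¬ e.IsDiag) ∧
  T.card = n - 1 ∧
  (SimpleGraph.fromEdgeSet (↑T : Set (Sym2 (Fin n)))).Connected ∧
  ∀ e ∈ T, ∀ f ∈ T, ¬ Crosses e f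

/-- One flip: exactly one edge is removed and one edge is added. -/
def FlipStep {n : ℕ} (T T' : Finset (Sym2 (Fin n))) : Prop :=
  (T \ T').card = 1 ∧ (T' \ T).card = 1

/-- A flip sequence: consecutive non-crossing spanning trees differing by one flip. -/
def IsFlipSeq (n : ℕ) (L : List (Finset (Sym2 (Fin n)))) : Prop :=
  (∀ T ∈ L, IsNCST n T) ∧ L.Chain' FlipStep

/-- There is a flip sequence of length `ℓ` from `T₁` to `T₂`. -/
def HasFlipSeq (n : ℕ) (T₁ T₂ : Finset (Sym2 (Fin n))) (ℓ : ℕ) : Prop :=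
  ∃ L : List (Finset (Sym2 (Fin n))), IsFlipSeq n L ∧ L.length = ℓ + 1 ∧
    L.head? = some T₁ ∧ L.getLast? = some T₂

/-- The side of the chord from `a` to `b`: the two endpoints together with all
points strictly between them in the cyclic order. -/
def sideOf {n : ℕ} (a b : Fin n) : Finset (Fin n) :=
  Finset.univ.filter (fun x => x = a ∨ x = b ∨ CBtw a x b)

/-- Holes of `T` (pairs of consecutive points not joined by an edge of `T`)
with both endpoints in `A`, indexed by their first point. -/
def holesIn (n : ℕ) (T : Finset (Sym2 (Fin n))) (A : Finset (Fin n)) : Finset (Fin n) :=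
  Finset.univ.filter (fun i => s(i, nextIdx i) ∉ T ∧ i ∈ A ∧ nextIdx i ∈ A)

/-- Degree of the side `sideOf a b` in `T'`: the number of endpoints (counted
with multiplicity over the chords of `T'`) lying inside the side. An endpoint
`v` of a chord `vw` is inside the side if `v` belongs to it and either `v` is
not an endpoint of the defining chord `ab` or both `v, w` are in the side. -/
def sideDegree (n : ℕ) (a b : Fin n) (T' : Finset (Sym2 (Fin n))) : ℕ :=
  ((Finset.univ : Finset (Fin n × Fin n)).filter
    (fun p => s(p.1, p.2) ∈ T' ∧ ¬ IsBorderEdge s(p.1, p.2) ∧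
      p.1 ∈ sideOf a b ∧ ((p.1 ≠ a ∧ p.1 ≠ b) ∨ p.2 ∈ sideOf a b))).card

/-- A nice pair of trees: the same border edges, and no common chord. -/
def NicePair (n : ℕ) (T₁ T₂ : Finset (Sym2 (Fin n))) : Prop :=
  IsNCST n T₁ ∧ IsNCST n T₂ ∧
  (∀ e, IsBorderEdge e → (e ∈ T₁ ↔ e ∈ T₂)) ∧
  (∀ e ∈ T₁, e ∈ T₂ → IsBorderEdge e)

/-- The side `sideOf a b` of the chord `ab ∈ T` is `τ`-extremal for `T'` if its
degree in `T'` is at most `τ · k_A`, while every side of a chord of `T'`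
strictly contained in it has degree in `T` exceeding `τ` times its number of
holes. -/
def TauExtremal (n : ℕ) (τ : ℝ) (T T' : Finset (Sym2 (Fin n)))
    (a b : Fin n) : Prop :=
  s(a, b) ∈ T ∧ ¬ IsBorderEdge s(a, b) ∧
  (sideDegree n a b T' : ℝ) ≤ τ * (holesIn n T (sideOf a b)).card ∧
  ∀ c d : Fin n, s(c, d) ∈ T' → ¬ IsBorderEdge s(c, d) →
    sideOf c d ⊂ sideOf a b →
    τ * (holesIn n T' (sideOf c d)).card < (sideDegree n c d T : ℝ)

/-- Bad holes of `T` in `A` with respect to `T'`: holes lying inside a side of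
a chord of `T'` strictly contained in `A`. -/
def badHolesIn (n : ℕ) (T T' : Finset (Sym2 (Fin n))) (A : Finset (Fin n)) :
    Finset (Fin n) :=
  (holesIn n T A).filter (fun i => ∃ c d : Fin n, s(c, d) ∈ T' ∧
    ¬ IsBorderEdge s(c, d) ∧ sideOf c d ⊂ A ∧
    i ∈ sideOf c d ∧ nextIdx i ∈ sideOf c d)


section Arith
variable {n : ℕ}

theorem finSubVal (x y : Fin n) :
    (x - y).val = if y.val ≤ x.val then x.val - y.val else x.val + n - y.val := by
  rw [Fin.sub_def]
  simp only []
  rcases le_or_gt y.val x.val with h | h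
  · rw [if_pos h]
    have h1 : n - y.val + x.val = (x.val - y.val) + n := by have := y.isLt; omega
    rw [h1, Nat.add_mod_right, Nat.mod_eq_of_lt (by have := x.isLt; omega)]
  · rw [if_neg (not_le.mpr h)]
    rw [Nat.mod_eq_of_lt (by have := x.isLt; have := y.isLt; omega)]
    have := y.isLt; omega

theorem eq_iff_subval_zero (x y : Fin n) : x = y ↔ (x - y).val = 0 := by
  haveI : NeZero n := ⟨x.pos.ne'⟩
  rw [← sub_eq_zero (a := x) (b := y), Fin.ext_iff, Fin.val_zero]

theorem eq_iff_subval_eq (x y c : Fin n) : x = y ↔ (x - c).val = (y - c).val := by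
  haveI : NeZero n := ⟨x.pos.ne'⟩
  constructor
  · rintro rfl; rfl
  · intro h
    exact sub_left_inj.mp (Fin.ext h)

theorem mem_sideOf {a b x : Fin n} : x ∈ sideOf a b ↔ (x - a).val ≤ (b - a).val := by
  haveI : NeZero n := ⟨x.pos.ne'⟩
  rw [sideOf, Finset.mem_filter]
  simp only [sideOf, Finset.mem_filter, Finset.mem_univ, true_and, CBtw]
  constructor
  · rintro (rfl | rfl | ⟨h1, h2⟩)
    · simp
    · exact le_rfl
    · exact le_of_lt h2
  · intro h
    rcases Nat.eq_zero_or_pos (x - a).val with h0 | h0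
    · exact Or.inl ((eq_iff_subval_zero x a).mpr h0)
    rcases eq_or_lt_of_le h with he | hl
    · exact Or.inr (Or.inl ((eq_iff_subval_eq x b a).mpr he))
    · exact Or.inr (Or.inr ⟨h0, hl⟩)

theorem nextIdx_eq_add_one [NeZero n] (i : Fin n) : nextIdx i = i + 1 := by
  apply Fin.ext
  rw [Fin.add_def, Fin.val_one']
  show (i.val + 1) % n = (i.val + 1 % n) % n
  rw [Nat.add_mod_mod]

theorem val_add_one_of_lt [NeZero n] {x : Fin n} (h : x.val + 1 < n) : (x + 1).val = x.val + 1 := by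
  rw [Fin.add_def]
  show (x.val + (1:Fin n).val) % n = x.val + 1
  have h2 : (1:Fin n).val = 1 := by rw [Fin.val_one']; exact Nat.mod_eq_of_lt (by omega)
  rw [h2, Nat.mod_eq_of_lt h]

theorem val_sub_one [NeZero n] {x : Fin n} (hn : 2 ≤ n) (h : x.val ≠ 0) : (x - 1).val = x.val - 1 := by
  rw [finSubVal, Fin.val_one', Nat.mod_eq_of_lt (by omega)]
  have := x.isLt
  split_ifs with hh <;> omega

theorem val_pred_sub_self [NeZero n] (hn : 2 ≤ n) (x : Fin n) :
    ((x - 1) - x).val = n - 1 := by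
  have h1 : (1 : Fin n).val = 1 := by rw [Fin.val_one']; exact Nat.mod_eq_of_lt (by omega)
  have hx := x.isLt
  rcases Nat.eq_zero_or_pos x.val with h0 | h0
  · have ht : (x - 1).val = x.val + n - 1 := by
      rw [finSubVal, h1, if_neg (by omega)]
    rw [finSubVal, ht, if_pos (by omega)]; omega
  · have ht : (x - 1).val = x.val - 1 := by
      rw [finSubVal, h1, if_pos (by omega)]
    rw [finSubVal, ht, if_neg (by omega)]; omega

/-- Construct a crossing from position data relative to `a`. -/
theorem crosses_of_pos {a b x y : Fin n} (hab : a ≠ b)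
    (hx0 : 0 < (x - a).val) (hxb : (x - a).val < (b - a).val)
    (hyb : (b - a).val < (y - a).val) : Crosses s(a,b) s(x,y) := by
  haveI : NeZero n := ⟨a.pos.ne'⟩
  have hb0 : 0 < (b - a).val := by
    rcases Nat.eq_zero_or_pos (b - a).val with h | h
    · exact absurd ((eq_iff_subval_zero b a).mpr h).symm hab
    · exact h
  refine ⟨a, b, x, y, rfl, rfl, hab, ?_, ?_, ?_, ?_, ?_, ?_⟩
  · intro h; have := (eq_iff_subval_zero x a).mp h.symm; omega
  · intro h; have := (eq_iff_subval_zero y a).mp h.symm; omega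
  · intro h; have := (eq_iff_subval_eq x b a).mp h.symm; omega
  · intro h; have := (eq_iff_subval_eq y b a).mp h.symm; omega
  · intro h; have := (eq_iff_subval_eq x y a).mp h; omega
  · exact Or.inl ⟨⟨hx0, hxb⟩, fun hc => by have := hc.1; have := hc.2; omega⟩

end Arith
section Sides
variable {n : ℕ}

theorem border_of_val [NeZero n] (hn : 2 ≤ n) {a b : Fin n}
    (h : (b - a).val = 1 ∨ (b - a).val = n - 1) : IsBorderEdge s(a, b) := by
  have h1 : (1 : Fin n).val = 1 := by rw [Fin.val_one']; exact Nat.mod_eq_of_lt (by omega)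
  rcases h with h | h
  · refine ⟨a, ?_⟩
    have hb : b = a + 1 := by
      have : b - a = 1 := Fin.ext (by rw [h1]; exact h)
      have h2 := sub_add_cancel b a
      rw [this] at h2
      rw [← h2, add_comm]
    rw [hb, nextIdx_eq_add_one]
  · refine ⟨b, ?_⟩
    have hab : (a - b).val = 1 := by
      have e1 := finSubVal a b
      have e2 := finSubVal b a
      have : a.val ≠ b.val := by
        intro hc
        have : a = b := Fin.ext hc
        rw [this, sub_self, Fin.val_zero] at h
        omega
      have := a.isLt; have := b.isLt
      split_ifs at e1 e2 <;> omega
    have hb : a = b + 1 := by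
      have : a - b = 1 := Fin.ext (by rw [h1]; exact hab)
      have h2 := sub_add_cancel a b
      rw [this] at h2
      rw [← h2, add_comm]
    rw [hb, nextIdx_eq_add_one, Sym2.eq_swap]

theorem nonborder_val [NeZero n] {a b : Fin n} (hab : a ≠ b)
    (hnb : ¬ IsBorderEdge s(a, b)) : 2 ≤ (b - a).val ∧ (b - a).val ≤ n - 2 := by
  have hn : 2 ≤ n := by
    have := a.isLt; have := b.isLt
    rcases Nat.lt_or_ge n 2 with h | h
    · exfalso; apply hab; apply Fin.ext; omega
    · exact h
  have h0 : (b - a).val ≠ 0 := fun h => hab ((eq_iff_subval_zero b a).mpr h).symm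
  have hlt := (b - a).isLt
  have hne1 : (b - a).val ≠ 1 := fun h => hnb (border_of_val hn (Or.inl h))
  have hnen : (b - a).val ≠ n - 1 := fun h => hnb (border_of_val hn (Or.inr h))
  omega

/-- If `a` is the base endpoint of a non-border chord `ab` and `a` lies in a side
contained in `sideOf a b`, then `a` is an endpoint of that side's chord. -/
theorem base_endpoint_of_mem {a b c d : Fin n} (hab : a ≠ b)
    (hnb : ¬ IsBorderEdge s(a, b)) (hsub : sideOf c d ⊆ sideOf a b)
    (ha : a ∈ sideOf c d) : a = c ∨ a = d := by
  haveI : NeZero n := ⟨a.pos.ne'⟩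
  have hβ := nonborder_val hab hnb
  have hn : 2 ≤ n := by have := (b - a).isLt; omega
  by_contra hcon
  push_neg at hcon
  obtain ⟨hac, had⟩ := hcon
  rw [mem_sideOf] at ha
  have ht0 : (a - c).val ≠ 0 := fun h => hac ((eq_iff_subval_zero a c).mpr h)
  have htγ : (a - c).val ≠ (d - c).val := fun h => had ((eq_iff_subval_eq a d c).mpr h)
  have hmem : a - 1 ∈ sideOf c d := by
    rw [mem_sideOf, sub_right_comm, val_sub_one hn]
    · omega
    · intro h; apply ht0; rw [h]
  have := hsub hmem
  rw [mem_sideOf, val_pred_sub_self hn] at this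
  omega

theorem tip_endpoint_of_mem {a b c d : Fin n} (hab : a ≠ b)
    (hnb : ¬ IsBorderEdge s(a, b)) (hsub : sideOf c d ⊆ sideOf a b)
    (hb : b ∈ sideOf c d) : b = c ∨ b = d := by
  haveI : NeZero n := ⟨a.pos.ne'⟩
  have hβ := nonborder_val hab hnb
  have hn : 2 ≤ n := by have := (b - a).isLt; omega
  by_contra hcon
  push_neg at hcon
  obtain ⟨hbc, hbd⟩ := hcon
  rw [mem_sideOf] at hb
  have ht0 : (b - c).val ≠ 0 := fun h => hbc ((eq_iff_subval_zero b c).mpr h)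
  have htγ : (b - c).val ≠ (d - c).val := fun h => hbd ((eq_iff_subval_eq b d c).mpr h)
  have hdc := (d - c).isLt
  have hmem : b + 1 ∈ sideOf c d := by
    rw [mem_sideOf, add_sub_right_comm, val_add_one_of_lt (by omega)]
    omega
  have := hsub hmem
  rw [mem_sideOf, add_sub_right_comm, val_add_one_of_lt (by have := (b-a).isLt; omega)] at this
  omega

theorem side_inj {c d c' d' z : Fin n} (hcd : c ≠ d) (hcd' : c' ≠ d')
    (hz : z ∉ sideOf c d) (hz' : z ∉ sideOf c' d')
    (h : sideOf c d = sideOf c' d') : c = c' ∧ d = d' := by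
  haveI : NeZero n := ⟨c.pos.ne'⟩
  have hn : 2 ≤ n := by
    have := c.isLt; have := d.isLt
    rcases Nat.lt_or_ge n 2 with hh | hh
    · exfalso; apply hcd; apply Fin.ext; omega
    · exact hh
  rw [mem_sideOf] at hz hz'
  have hγ2 : (d - c).val ≤ n - 2 := by have := (z - c).isLt; omega
  have hγ2' : (d' - c').val ≤ n - 2 := by have := (z - c').isLt; omega
  have hγ0 : (d - c).val ≠ 0 := fun hh => hcd ((eq_iff_subval_zero d c).mpr hh).symm
  have hγ0' : (d' - c').val ≠ 0 := fun hh => hcd' ((eq_iff_subval_zero d' c').mpr hh).symm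
  have hcc : c = c' := by
    by_contra hcc
    have hc'S : c' ∈ sideOf c d := by
      rw [h, mem_sideOf, sub_self, Fin.val_zero]; omega
    rw [mem_sideOf] at hc'S
    have ht0 : (c' - c).val ≠ 0 := fun hh => hcc ((eq_iff_subval_zero c' c).mpr hh).symm
    have hmem : c' - 1 ∈ sideOf c d := by
      rw [mem_sideOf, sub_right_comm, val_sub_one hn]
      · omega
      · intro hh; apply ht0; rw [hh]
    rw [h, mem_sideOf, val_pred_sub_self hn] at hmem
    omega
  subst hcc
  refine ⟨rfl, ?_⟩
  have hd'S : d' ∈ sideOf c d := by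
    rw [h, mem_sideOf]
  rw [mem_sideOf] at hd'S
  rcases eq_or_lt_of_le hd'S with he | hlt
  · exact ((eq_iff_subval_eq d' d c).mpr he).symm
  · exfalso
    have hdc := (d - c).isLt
    have hmem : d' + 1 ∈ sideOf c d := by
      rw [mem_sideOf, add_sub_right_comm, val_add_one_of_lt (by omega)]
      omega
    rw [h, mem_sideOf, add_sub_right_comm, val_add_one_of_lt (by omega)] at hmem
    omega

end Sides
section Overlap
variable {n : ℕ}

theorem crosses_of_overlap {c d c' d' x1 x2 x z : Fin n}
    (hcd : c ≠ d) (hcd' : c' ≠ d')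
    (h1 : x1 ∈ sideOf c d) (h1' : x1 ∉ sideOf c' d')
    (h2 : x2 ∉ sideOf c d) (h2' : x2 ∈ sideOf c' d')
    (ht : x ∈ sideOf c d) (ht' : x ∈ sideOf c' d')
    (hx : ¬((x = c ∨ x = d) ∧ (x = c' ∨ x = d')))
    (hz : z ∉ sideOf c d) (hz' : z ∉ sideOf c' d') :
    Crosses s(c, d) s(c', d') := by
  haveI : NeZero n := ⟨c.pos.ne'⟩
  simp only [mem_sideOf] at h1 h1' h2 h2' ht ht' hz hz'
  have hrw : ∀ w : Fin n, (w - c').val = ((w - c) - (c' - c)).val := by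
    intro w; rw [sub_sub_sub_cancel_right]
  rw [hrw x1, hrw d', finSubVal (x1 - c) (c' - c), finSubVal (d' - c) (c' - c)] at h1'
  rw [hrw x2, hrw d', finSubVal (x2 - c) (c' - c), finSubVal (d' - c) (c' - c)] at h2'
  rw [hrw x, hrw d', finSubVal (x - c) (c' - c), finSubVal (d' - c) (c' - c)] at ht'
  rw [hrw z, hrw d', finSubVal (z - c) (c' - c), finSubVal (d' - c) (c' - c)] at hz'
  rw [eq_iff_subval_zero x c, eq_iff_subval_eq x d c, eq_iff_subval_eq x c' c,
    eq_iff_subval_eq x d' c] at hx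
  have hγ0 : (d - c).val ≠ 0 := fun hh => hcd ((eq_iff_subval_zero d c).mpr hh).symm
  have huv : (c' - c).val ≠ (d' - c).val := fun hh => hcd' ((eq_iff_subval_eq c' d' c).mpr hh)
  have b1 := (x1 - c).isLt; have b2 := (x2 - c).isLt; have b3 := (x - c).isLt
  have b4 := (z - c).isLt; have b5 := (c' - c).isLt; have b6 := (d' - c).isLt
  have b7 := (d - c).isLt
  have hkey : (0 < (c' - c).val ∧ (c' - c).val < (d - c).val ∧ (d - c).val < (d' - c).val) ∨
      (0 < (d' - c).val ∧ (d' - c).val < (d - c).val ∧ (d - c).val < (c' - c).val) := by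
    split_ifs at h1' h2' ht' hz' <;> omega
  refine ⟨c, d, c', d', rfl, rfl, hcd, ?_, ?_, ?_, ?_, hcd', ?_⟩
  · intro hh; have := (eq_iff_subval_zero c' c).mp hh.symm
    rcases hkey with hk | hk <;> omega
  · intro hh; have := (eq_iff_subval_zero d' c).mp hh.symm
    rcases hkey with hk | hk <;> omega
  · intro hh; have := (eq_iff_subval_eq c' d c).mp hh.symm
    rcases hkey with hk | hk <;> omega
  · intro hh; have := (eq_iff_subval_eq d' d c).mp hh.symm
    rcases hkey with hk | hk <;> omega
  · rcases hkey with ⟨a1, a2, a3⟩ | ⟨a1, a2, a3⟩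
    · exact Or.inl ⟨⟨a1, a2⟩, fun hcon => by have := hcon.1; have := hcon.2; omega⟩
    · exact Or.inr ⟨⟨a1, a2⟩, fun hcon => by have := hcon.1; have := hcon.2; omega⟩

end Overlap
section Counting
variable {n : ℕ}

theorem card_sideOf [NeZero n] (a b : Fin n) :
    (sideOf a b).card = (b - a).val + 1 := by
  rw [show (b - a).val + 1 = (Finset.range ((b - a).val + 1)).card from (Finset.card_range _).symm]
  apply Finset.card_bij (fun x _ => (x - a).val)
  · intro x hx; rw [mem_sideOf] at hx; rw [Finset.mem_range]; omega
  · intro x hx y hy hxy; exact (eq_iff_subval_eq x y a).mpr hxy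
  · intro j hj
    rw [Finset.mem_range] at hj
    have hjn : j < n := by have := (b - a).isLt; omega
    refine ⟨a + ⟨j, hjn⟩, ?_, ?_⟩
    · rw [mem_sideOf, add_sub_cancel_left]; exact Nat.lt_succ_iff.mp hj
    · rw [add_sub_cancel_left]

/-- The slots of a side: indices `i` with both `i` and `i+1` in the side. -/
theorem card_slots [NeZero n] {a b : Fin n} (hβ : 2 ≤ (b - a).val)
    (hβ' : (b - a).val ≤ n - 2) :
    (Finset.univ.filter (fun i : Fin n => i ∈ sideOf a b ∧ nextIdx i ∈ sideOf a b)).card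
      = (b - a).val := by
  have hn : 4 ≤ n := by omega
  have hmem : ∀ i : Fin n, (i ∈ sideOf a b ∧ nextIdx i ∈ sideOf a b) ↔
      (i - a).val + 1 ≤ (b - a).val := by
    intro i
    have hi := (i - a).isLt
    rw [mem_sideOf, mem_sideOf, nextIdx_eq_add_one, add_sub_right_comm]
    constructor
    · rintro ⟨hi1, hi2⟩
      rcases Nat.lt_or_ge ((i - a).val + 1) n with hc | hc
      · rw [val_add_one_of_lt hc] at hi2; omega
      · omega
    · intro h
      rw [val_add_one_of_lt (by omega)]
      omega
  rw [show (b - a).val = (Finset.range ((b - a).val)).card from (Finset.card_range _).symm]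
  apply Finset.card_bij (fun x _ => (x - a).val)
  · intro x hx
    rw [Finset.mem_filter] at hx
    rw [(hmem x)] at hx
    rw [Finset.mem_range]; omega
  · intro x hx y hy hxy; exact (eq_iff_subval_eq x y a).mpr hxy
  · intro j hj
    rw [Finset.mem_range] at hj
    have hjn : j < n := by omega
    refine ⟨a + ⟨j, hjn⟩, ?_, ?_⟩
    · rw [Finset.mem_filter]
      refine ⟨Finset.mem_univ _, ?_⟩
      rw [hmem, add_sub_cancel_left]
      exact hj
    · rw [add_sub_cancel_left]

theorem nextIdx_val (i : Fin n) :
    (nextIdx i).val = if i.val + 1 < n then i.val + 1 else 0 := by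
  show (i.val + 1) % n = _
  split_ifs with h
  · exact Nat.mod_eq_of_lt h
  · have : i.val + 1 = n := by have := i.isLt; omega
    rw [this, Nat.mod_self]

theorem nextIdx_inj (hn : 3 ≤ n) {i j : Fin n}
    (h : s(i, nextIdx i) = s(j, nextIdx j)) : i = j := by
  rw [Sym2.eq_iff] at h
  rcases h with ⟨h1, _⟩ | ⟨h1, h2⟩
  · exact h1
  · exfalso
    have e1 : i.val = (nextIdx j).val := by rw [h1]
    have e2 : j.val = (nextIdx i).val := by rw [h2]
    rw [nextIdx_val] at e1 e2
    have := i.isLt; have := j.isLt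
    split_ifs at e1 e2 <;> omega

end Counting
section Graph

theorem exists_desc {V : Type*} {G : SimpleGraph V} (hconn : G.Connected) {v a : V}
    (hva : v ≠ a) : ∃ u, G.Adj v u ∧ G.dist u a + 1 = G.dist v a := by
  obtain ⟨p, hp⟩ := (hconn v a).exists_walk_length_eq_dist
  cases p with
  | nil => exact absurd rfl hva
  | @cons _ u _ h q =>
    refine ⟨u, h, ?_⟩
    have h1 : G.dist u a ≤ q.length := SimpleGraph.dist_le q
    have h2 : G.dist v a ≤ G.dist u a + 1 := by
      obtain ⟨r, hr⟩ := (hconn u a).exists_walk_length_eq_dist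
      have := SimpleGraph.dist_le (SimpleGraph.Walk.cons h r)
      rw [SimpleGraph.Walk.length_cons, hr] at this
      exact this
    rw [SimpleGraph.Walk.length_cons] at hp
    omega

theorem card_filter_in_le {n : ℕ} {T : Finset (Sym2 (Fin n))} (hT : IsNCST n T)
    {A : Finset (Fin n)} {a : Fin n} (ha : a ∈ A) :
    (T.filter (fun e => ∀ v ∈ e, v ∈ A)).card + (n - A.card) ≤ n - 1 := by
  classical
  set G := SimpleGraph.fromEdgeSet (↑T : Set (Sym2 (Fin n))) with hG
  have hconn : G.Connected := hT.2.2.1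
  have hstep : ∀ v : Fin n, v ≠ a → ∃ u, G.Adj v u ∧ G.dist u a + 1 = G.dist v a :=
    fun v hv => exists_desc hconn hv
  choose f hf1 hf2 using hstep
  have hout : (Finset.univ.filter (fun v : Fin n => v ∉ A)).card ≤
      (T.filter (fun e => ¬ ∀ v ∈ e, v ∈ A)).card := by
    apply Finset.card_le_card_of_injOn
      (fun v => if h : v = a then s(v, v) else s(v, f v h))
    · intro v hv
      rw [Finset.mem_coe, Finset.mem_filter] at hv
      have hva : v ≠ a := fun h => hv.2 (h ▸ ha)
      rw [Finset.mem_coe]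
      dsimp only
      rw [dif_neg hva, Finset.mem_filter]
      have hadj := hf1 v hva
      rw [hG, SimpleGraph.fromEdgeSet_adj] at hadj
      refine ⟨hadj.1, fun hall => hv.2 (hall v (Sym2.mem_mk_left _ _))⟩
    · intro v hv w hw hvw
      simp only [Finset.coe_filter, Set.mem_setOf_eq] at hv hw
      have hva : v ≠ a := fun h => hv.2 (h ▸ ha)
      have hwa : w ≠ a := fun h => hw.2 (h ▸ ha)
      simp only [] at hvw
      rw [dif_neg hva, dif_neg hwa, Sym2.eq_iff] at hvw
      rcases hvw with ⟨h1, _⟩ | ⟨h1, h2⟩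
      · exact h1
      · exfalso
        have d1 := hf2 v hva
        have d2 := hf2 w hwa
        have hposv : 0 < G.dist v a := hconn.pos_dist_of_ne hva
        have hposw : 0 < G.dist w a := hconn.pos_dist_of_ne hwa
        rw [h2] at d1
        rw [← h1] at d2
        omega
  have hsplit := Finset.card_filter_add_card_filter_not
    (s := T) (p := fun e => ∀ v ∈ e, v ∈ A)
  have hAc : (Finset.univ.filter (fun v : Fin n => v ∉ A)).card = n - A.card := by
    have : Finset.univ.filter (fun v : Fin n => v ∉ A) = Aᶜ := by
      ext v; simp
    rw [this, Finset.card_compl, Fintype.card_fin]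
  rw [hAc] at hout
  have hcard := hT.2.1
  omega

end Graph
section DegreeBound
variable {n : ℕ}

theorem ne_of_mem_nondiag {T : Finset (Sym2 (Fin n))} (hT : IsNCST n T) {a b : Fin n}
    (hab : s(a, b) ∈ T) : a ≠ b :=
  fun h => hT.1 _ hab (by rw [h]; exact Sym2.mk_isDiag_iff.mpr rfl)

theorem chords_card_le {T : Finset (Sym2 (Fin n))} (hT : IsNCST n T) {a b : Fin n}
    (hab : s(a, b) ∈ T) (hnb : ¬ IsBorderEdge s(a, b)) :
    (T.filter (fun e => ¬ IsBorderEdge e ∧ ∀ v ∈ e, v ∈ sideOf a b)).card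
      ≤ (holesIn n T (sideOf a b)).card := by
  haveI : NeZero n := ⟨a.pos.ne'⟩
  have hab_ne : a ≠ b := ne_of_mem_nondiag hT hab
  have hβ := nonborder_val hab_ne hnb
  have hn4 : 4 ≤ n := by have := (b - a).isLt; omega
  have ha : a ∈ sideOf a b := by
    rw [mem_sideOf, sub_self, Fin.val_zero]; exact Nat.zero_le _
  have hEin := card_filter_in_le hT ha
  rw [card_sideOf] at hEin
  have hsplitE := Finset.card_filter_add_card_filter_not
      (s := T.filter (fun e => ∀ v ∈ e, v ∈ sideOf a b)) (p := fun e => IsBorderEdge e)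
  have hBdef : (T.filter (fun e => ∀ v ∈ e, v ∈ sideOf a b)).filter (fun e => IsBorderEdge e)
      = T.filter (fun e => IsBorderEdge e ∧ ∀ v ∈ e, v ∈ sideOf a b) := by
    ext e; simp only [Finset.mem_filter]; tauto
  have hCdef : (T.filter (fun e => ∀ v ∈ e, v ∈ sideOf a b)).filter (fun e => ¬ IsBorderEdge e)
      = T.filter (fun e => ¬ IsBorderEdge e ∧ ∀ v ∈ e, v ∈ sideOf a b) := by
    ext e; simp only [Finset.mem_filter]; tauto
  rw [hBdef, hCdef] at hsplitE
  have hslots := card_slots (n := n) (a := a) (b := b) hβ.1 hβ.2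
  have hslotsplit := Finset.card_filter_add_card_filter_not
      (s := Finset.univ.filter (fun i : Fin n => i ∈ sideOf a b ∧ nextIdx i ∈ sideOf a b))
      (p := fun i => s(i, nextIdx i) ∈ T)
  have hholes : (Finset.univ.filter
        (fun i : Fin n => i ∈ sideOf a b ∧ nextIdx i ∈ sideOf a b)).filter
        (fun i => ¬ s(i, nextIdx i) ∈ T) = holesIn n T (sideOf a b) := by
    ext i
    simp only [holesIn, Finset.mem_filter, Finset.mem_univ, true_and]
    tauto
  rw [hholes] at hslotsplit
  have hBcard : (T.filter (fun e => IsBorderEdge e ∧ ∀ v ∈ e, v ∈ sideOf a b)).card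
      = ((Finset.univ.filter
          (fun i : Fin n => i ∈ sideOf a b ∧ nextIdx i ∈ sideOf a b)).filter
          (fun i => s(i, nextIdx i) ∈ T)).card := by
    symm
    apply Finset.card_bij (fun i _ => s(i, nextIdx i))
    · intro i hi
      simp only [Finset.mem_filter, Finset.mem_univ, true_and] at hi
      rw [Finset.mem_filter]
      refine ⟨hi.2, ⟨i, rfl⟩, ?_⟩
      intro v hv
      rcases Sym2.mem_iff.mp hv with rfl | rfl
      · exact hi.1.1
      · exact hi.1.2
    · intro i _ j _ hij
      exact nextIdx_inj (by omega) hij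
    · intro e he
      rw [Finset.mem_filter] at he
      obtain ⟨heT, ⟨i, rfl⟩, hall⟩ := he
      refine ⟨i, ?_, rfl⟩
      simp only [Finset.mem_filter, Finset.mem_univ, true_and]
      exact ⟨⟨hall i (Sym2.mem_mk_left _ _), hall _ (Sym2.mem_mk_right _ _)⟩, heT⟩
  have hholes_le : (holesIn n T (sideOf a b)).card ≤ (b - a).val := by omega
  omega

theorem pairs_card {u v : Fin n} (huv : u ≠ v) :
    (Finset.univ.filter (fun p : Fin n × Fin n => s(p.1, p.2) = s(u, v))).card = 2 := by
  have hset : Finset.univ.filter (fun p : Fin n × Fin n => s(p.1, p.2) = s(u, v))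
      = {(u, v), (v, u)} := by
    ext p
    simp only [Finset.mem_filter, Finset.mem_univ, true_and, Finset.mem_insert,
      Finset.mem_singleton, Sym2.eq_iff, Prod.ext_iff]
  rw [hset, Finset.card_insert_of_notMem, Finset.card_singleton]
  simp only [Finset.mem_singleton, Prod.ext_iff]
  rintro ⟨rfl, -⟩
  exact huv rfl

theorem sideDegree_eq_two_chords {T : Finset (Sym2 (Fin n))} (hT : IsNCST n T) {a b : Fin n}
    (hab : s(a, b) ∈ T) (hnb : ¬ IsBorderEdge s(a, b)) :
    sideDegree n a b T
      = 2 * (T.filter (fun e => ¬ IsBorderEdge e ∧ ∀ v ∈ e, v ∈ sideOf a b)).card := by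
  haveI : NeZero n := ⟨a.pos.ne'⟩
  have hab_ne : a ≠ b := ne_of_mem_nondiag hT hab
  have hβ := nonborder_val hab_ne hnb
  have hP : (Finset.univ : Finset (Fin n × Fin n)).filter
      (fun p => s(p.1, p.2) ∈ T ∧ ¬ IsBorderEdge s(p.1, p.2) ∧
        p.1 ∈ sideOf a b ∧ ((p.1 ≠ a ∧ p.1 ≠ b) ∨ p.2 ∈ sideOf a b))
      = (Finset.univ : Finset (Fin n × Fin n)).filter
      (fun p => s(p.1, p.2) ∈ T ∧ ¬ IsBorderEdge s(p.1, p.2) ∧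
        p.1 ∈ sideOf a b ∧ p.2 ∈ sideOf a b) := by
    apply Finset.filter_congr
    intro p _
    constructor
    · rintro ⟨h1, h2, h3, h4⟩
      refine ⟨h1, h2, h3, ?_⟩
      by_contra hp2
      rcases h4 with ⟨hpa, hpb⟩ | hp2'
      · apply hT.2.2.2 _ hab _ h1
        rw [mem_sideOf] at h3
        rw [mem_sideOf] at hp2
        push_neg at hp2
        apply crosses_of_pos hab_ne
        · rcases Nat.eq_zero_or_pos (p.1 - a).val with h0 | h0
          · exact absurd ((eq_iff_subval_zero p.1 a).mpr h0) hpa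
          · exact h0
        · rcases eq_or_lt_of_le h3 with he | hl
          · exact absurd ((eq_iff_subval_eq p.1 b a).mpr he) hpb
          · exact hl
        · exact hp2
      · exact hp2 hp2'
    · rintro ⟨h1, h2, h3, h4⟩
      exact ⟨h1, h2, h3, Or.inr h4⟩
  show (Finset.univ.filter _).card = _
  rw [hP]
  have hbi : (Finset.univ : Finset (Fin n × Fin n)).filter
      (fun p => s(p.1, p.2) ∈ T ∧ ¬ IsBorderEdge s(p.1, p.2) ∧
        p.1 ∈ sideOf a b ∧ p.2 ∈ sideOf a b)
      = (T.filter (fun e => ¬ IsBorderEdge e ∧ ∀ v ∈ e, v ∈ sideOf a b)).biUnion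
        (fun e => Finset.univ.filter (fun p : Fin n × Fin n => s(p.1, p.2) = e)) := by
    ext p
    simp only [Finset.mem_filter, Finset.mem_biUnion, Finset.mem_univ, true_and]
    constructor
    · rintro ⟨h1, h2, h3, h4⟩
      refine ⟨s(p.1, p.2), ⟨h1, h2, ?_⟩, rfl⟩
      intro v hv
      rcases Sym2.mem_iff.mp hv with rfl | rfl
      · exact h3
      · exact h4
    · rintro ⟨e, he, rfl⟩
      exact ⟨he.1, he.2.1, he.2.2 p.1 (Sym2.mem_mk_left _ _), he.2.2 p.2 (Sym2.mem_mk_right _ _)⟩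
  rw [hbi, Finset.card_biUnion]
  · rw [Finset.sum_congr rfl (fun e he => ?_), Finset.sum_const, smul_eq_mul, mul_comm]
    have hnd : ¬ e.IsDiag := hT.1 e (Finset.mem_filter.mp he).1
    clear he
    induction e using Sym2.ind with
    | _ u v => exact pairs_card (fun h => hnd (Sym2.mk_isDiag_iff.mpr h))
  · intro x hx y hy hxy
    rw [Function.onFun, Finset.disjoint_left]
    intro p hp hp'
    rw [Finset.mem_filter] at hp hp'
    exact hxy (hp.2 ▸ hp'.2)

theorem sideDegree_le_two_holes {T : Finset (Sym2 (Fin n))} (hT : IsNCST n T) {a b : Fin n}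
    (hab : s(a, b) ∈ T) (hnb : ¬ IsBorderEdge s(a, b)) :
    sideDegree n a b T ≤ 2 * (holesIn n T (sideOf a b)).card := by
  rw [sideDegree_eq_two_chords hT hab hnb]
  exact Nat.mul_le_mul_left 2 (chords_card_le hT hab hnb)

end DegreeBound

theorem holesIn_nice_eq {n : ℕ} {T₁ T₂ : Finset (Sym2 (Fin n))} (hnice : NicePair n T₁ T₂)
    (S : Finset (Fin n)) : holesIn n T₁ S = holesIn n T₂ S := by
  ext i
  simp only [holesIn, Finset.mem_filter, Finset.mem_univ, true_and]
  have := hnice.2.2.1 s(i, nextIdx i) ⟨i, rfl⟩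
  tauto


/-- A `τ`-extremal side of a nice pair contains at most `(2/τ) · k_A` bad
holes. -/
theorem tau_extremal_few_bad_holes (n : ℕ) (τ : ℝ) (hτ : 2 < τ)
    (T₁ T₂ : Finset (Sym2 (Fin n))) (hnice : NicePair n T₁ T₂)
    (a b : Fin n) (hext : TauExtremal n τ T₁ T₂ a b) :
    ((badHolesIn n T₁ T₂ (sideOf a b)).card : ℝ)
      ≤ (2 / τ) * (holesIn n T₁ (sideOf a b)).card := by
  obtain ⟨hab, hnbab, _hdeg2, hmin⟩ := hext
  have hT₁ := hnice.1
  have hT₂ := hnice.2.1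
  have hcommon := hnice.2.2.2
  haveI : NeZero n := ⟨a.pos.ne'⟩
  have hab_ne : a ≠ b := ne_of_mem_nondiag hT₁ hab
  have hβ := nonborder_val hab_ne hnbab
  have hn4 : 4 ≤ n := by have := (b - a).isLt; omega
  -- a point outside A
  have hzout : b + 1 ∉ sideOf a b := by
    rw [mem_sideOf, add_sub_right_comm, val_add_one_of_lt (by omega)]
    omega
  classical
  -- the candidate sides and the maximal ones
  set P : Finset (Fin n × Fin n) := Finset.univ.filter (fun q : Fin n × Fin n =>
    s(q.1, q.2) ∈ T₂ ∧ ¬ IsBorderEdge s(q.1, q.2) ∧ sideOf q.1 q.2 ⊂ sideOf a b) with hPdef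
  set M : Finset (Fin n × Fin n) :=
    P.filter (fun q => ∀ r ∈ P, ¬ (sideOf q.1 q.2 ⊂ sideOf r.1 r.2)) with hMdef
  have hPmem : ∀ q : Fin n × Fin n, q ∈ P ↔ s(q.1, q.2) ∈ T₂ ∧ ¬ IsBorderEdge s(q.1, q.2) ∧
      sideOf q.1 q.2 ⊂ sideOf a b := by
    intro q; rw [hPdef, Finset.mem_filter]; simp only [Finset.mem_univ, true_and]
  -- Step A/B : bad holes are covered by holes of maximal sides
  have hcover : badHolesIn n T₁ T₂ (sideOf a b) ⊆
      M.biUnion (fun q => holesIn n T₁ (sideOf q.1 q.2)) := by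
    intro i hi
    rw [badHolesIn, Finset.mem_filter] at hi
    obtain ⟨hihole, c, d, hcd₂, hcdnb, hcdsub, hicd, hicd'⟩ := hi
    have hiA := hihole
    rw [holesIn, Finset.mem_filter] at hiA
    set Q : Finset (Fin n × Fin n) := P.filter (fun r =>
      i ∈ sideOf r.1 r.2 ∧ nextIdx i ∈ sideOf r.1 r.2) with hQdef
    have hQne : Q.Nonempty := by
      refine ⟨(c, d), ?_⟩
      rw [hQdef, Finset.mem_filter]
      exact ⟨(hPmem (c, d)).mpr ⟨hcd₂, hcdnb, hcdsub⟩, hicd, hicd'⟩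
    obtain ⟨q, hqQ, hqmax⟩ := Q.exists_max_image (fun r => (sideOf r.1 r.2).card) hQne
    rw [hQdef, Finset.mem_filter] at hqQ
    obtain ⟨hqP, hqi, hqi'⟩ := hqQ
    rw [Finset.mem_biUnion]
    refine ⟨q, ?_, ?_⟩
    · rw [hMdef, Finset.mem_filter]
      refine ⟨hqP, fun r hrP hss => ?_⟩
      have hrQ : r ∈ Q := by
        rw [hQdef, Finset.mem_filter]
        exact ⟨hrP, hss.subset hqi, hss.subset hqi'⟩
      have := hqmax r hrQ
      have := Finset.card_lt_card hss
      omega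
    · rw [holesIn, Finset.mem_filter]
      exact ⟨Finset.mem_univ _, hiA.2.1, hqi, hqi'⟩
  -- properties of members of M
  have hMprop : ∀ q ∈ M, s(q.1, q.2) ∈ T₂ ∧ ¬ IsBorderEdge s(q.1, q.2) ∧
      sideOf q.1 q.2 ⊂ sideOf a b ∧ ∀ r ∈ P, ¬ (sideOf q.1 q.2 ⊂ sideOf r.1 r.2) := by
    intro q hq
    rw [hMdef, Finset.mem_filter] at hq
    obtain ⟨hqP, hmax⟩ := hq
    rw [hPmem] at hqP
    exact ⟨hqP.1, hqP.2.1, hqP.2.2, hmax⟩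
  -- intersections of two distinct maximal sides consist of common endpoints
  have hint : ∀ q ∈ M, ∀ r ∈ M, q ≠ r → ∀ x : Fin n,
      x ∈ sideOf q.1 q.2 → x ∈ sideOf r.1 r.2 →
      (x = q.1 ∨ x = q.2) ∧ (x = r.1 ∨ x = r.2) := by
    intro q hq r hr hqr x hxq hxr
    obtain ⟨hq₂, hqnb, hqsub, hqmax⟩ := hMprop q hq
    obtain ⟨hr₂, hrnb, hrsub, hrmax⟩ := hMprop r hr
    have hq_ne : q.1 ≠ q.2 := ne_of_mem_nondiag hT₂ hq₂
    have hr_ne : r.1 ≠ r.2 := ne_of_mem_nondiag hT₂ hr₂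
    have hzq : b + 1 ∉ sideOf q.1 q.2 := fun h => hzout (hqsub.subset h)
    have hzr : b + 1 ∉ sideOf r.1 r.2 := fun h => hzout (hrsub.subset h)
    have hne_sides : sideOf q.1 q.2 ≠ sideOf r.1 r.2 := by
      intro h
      obtain ⟨h1, h2⟩ := side_inj hq_ne hr_ne hzq hzr h
      exact hqr (Prod.ext h1 h2)
    have hns1 : ¬ sideOf q.1 q.2 ⊆ sideOf r.1 r.2 := by
      intro h
      exact hqmax r ((hPmem r).mpr ⟨hr₂, hrnb, hrsub⟩) (ssubset_of_subset_of_ne h hne_sides)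
    have hns2 : ¬ sideOf r.1 r.2 ⊆ sideOf q.1 q.2 := by
      intro h
      exact hrmax q ((hPmem q).mpr ⟨hq₂, hqnb, hqsub⟩)
        (ssubset_of_subset_of_ne h (Ne.symm hne_sides))
    obtain ⟨x1, hx1q, hx1r⟩ := Finset.not_subset.mp hns1
    obtain ⟨x2, hx2r, hx2q⟩ := Finset.not_subset.mp hns2
    by_contra hxe
    exact hT₂.2.2.2 _ hq₂ _ hr₂
      (crosses_of_overlap hq_ne hr_ne hx1q hx1r hx2q hx2r hxq hxr hxe hzq hzr)
  -- the degree pair-sets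
  set D : Fin n × Fin n → Finset (Fin n × Fin n) := fun q =>
    (Finset.univ : Finset (Fin n × Fin n)).filter
      (fun p => s(p.1, p.2) ∈ T₁ ∧ ¬ IsBorderEdge s(p.1, p.2) ∧
        p.1 ∈ sideOf q.1 q.2 ∧ ((p.1 ≠ q.1 ∧ p.1 ≠ q.2) ∨ p.2 ∈ sideOf q.1 q.2)) with hDdef
  have hDdeg : ∀ q : Fin n × Fin n, sideDegree n q.1 q.2 T₁ = (D q).card := fun q => rfl
  have hDmem : ∀ q p : Fin n × Fin n, p ∈ D q ↔ s(p.1, p.2) ∈ T₁ ∧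
      ¬ IsBorderEdge s(p.1, p.2) ∧ p.1 ∈ sideOf q.1 q.2 ∧
      ((p.1 ≠ q.1 ∧ p.1 ≠ q.2) ∨ p.2 ∈ sideOf q.1 q.2) := by
    intro q p; rw [hDdef]; simp only [Finset.mem_filter, Finset.mem_univ, true_and]
  -- each D q for q ∈ M is contained in D (a, b)
  have hDsub : ∀ q ∈ M, D q ⊆ D (a, b) := by
    intro q hq p hp
    obtain ⟨hq₂, hqnb, hqsub, _⟩ := hMprop q hq
    rw [hDmem] at hp
    obtain ⟨hp1, hp2, hp3, hp4⟩ := hp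
    rw [hDmem]
    refine ⟨hp1, hp2, hqsub.subset hp3, ?_⟩
    show (p.1 ≠ a ∧ p.1 ≠ b) ∨ p.2 ∈ sideOf a b
    by_cases hpa : p.1 = a
    · subst hpa
      have := base_endpoint_of_mem hab_ne hnbab hqsub.subset hp3
      rcases hp4 with ⟨h1, h2⟩ | hp4
      · rcases this with h | h
        · exact absurd h h1
        · exact absurd h h2
      · exact Or.inr (hqsub.subset hp4)
    · by_cases hpb : p.1 = b
      · subst hpb
        have := tip_endpoint_of_mem hab_ne hnbab hqsub.subset hp3
        rcases hp4 with ⟨h1, h2⟩ | hp4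
        · rcases this with h | h
          · exact absurd h h1
          · exact absurd h h2
        · exact Or.inr (hqsub.subset hp4)
      · exact Or.inl ⟨hpa, hpb⟩
  -- the D q for q ∈ M are pairwise disjoint
  have hDdisj : ∀ q ∈ M, ∀ r ∈ M, q ≠ r → Disjoint (D q) (D r) := by
    intro q hq r hr hqr
    rw [Finset.disjoint_left]
    intro p hpq hpr
    obtain ⟨hq₂, hqnb, _, _⟩ := hMprop q hq
    obtain ⟨hr₂, _, _, _⟩ := hMprop r hr
    rw [hDmem] at hpq hpr
    obtain ⟨hp₁, hpnb, hp1q, hp4q⟩ := hpq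
    obtain ⟨_, _, hp1r, hp4r⟩ := hpr
    have hx := hint q hq r hr hqr p.1 hp1q hp1r
    have hp2q : p.2 ∈ sideOf q.1 q.2 := by
      rcases hp4q with ⟨h1, h2⟩ | h
      · rcases hx.1 with h | h
        · exact absurd h h1
        · exact absurd h h2
      · exact h
    have hp2r : p.2 ∈ sideOf r.1 r.2 := by
      rcases hp4r with ⟨h1, h2⟩ | h
      · rcases hx.2 with h | h
        · exact absurd h h1
        · exact absurd h h2
      · exact h
    have hy := hint q hq r hr hqr p.2 hp2q hp2r
    have hp12 : p.1 ≠ p.2 := ne_of_mem_nondiag hT₁ hp₁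
    have hedge : s(p.1, p.2) = s(q.1, q.2) := by
      rcases hx.1 with h1 | h1 <;> rcases hy.1 with h2 | h2
      · exact absurd (h1.trans h2.symm) hp12
      · rw [h1, h2]
      · rw [h1, h2, Sym2.eq_swap]
      · exact absurd (h1.trans h2.symm) hp12
    exact hqnb (hcommon _ (hedge ▸ hp₁) hq₂)
  -- numerical assembly
  have hτ0 : (0 : ℝ) < τ := by linarith
  have hB : (badHolesIn n T₁ T₂ (sideOf a b)).card ≤
      ∑ q ∈ M, (holesIn n T₁ (sideOf q.1 q.2)).card :=
    le_trans (Finset.card_le_card hcover) (Finset.card_biUnion_le)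
  have hC : ∀ q ∈ M, τ * ((holesIn n T₁ (sideOf q.1 q.2)).card : ℝ) ≤
      (sideDegree n q.1 q.2 T₁ : ℝ) := by
    intro q hq
    obtain ⟨hq₂, hqnb, hqsub, _⟩ := hMprop q hq
    have := hmin q.1 q.2 hq₂ hqnb hqsub
    rw [holesIn_nice_eq hnice]
    exact le_of_lt this
  have hD1 : ∑ q ∈ M, sideDegree n q.1 q.2 T₁ ≤ sideDegree n a b T₁ := by
    have h1 : ∑ q ∈ M, sideDegree n q.1 q.2 T₁ = (M.biUnion D).card := by
      rw [Finset.card_biUnion hDdisj]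
      exact Finset.sum_congr rfl (fun q _ => hDdeg q)
    rw [h1, hDdeg (a, b)]
    exact Finset.card_le_card (Finset.biUnion_subset.mpr hDsub)
  have hE : sideDegree n a b T₁ ≤ 2 * (holesIn n T₁ (sideOf a b)).card :=
    sideDegree_le_two_holes hT₁ hab hnbab
  -- combine in ℝ
  have hchain : τ * ((badHolesIn n T₁ T₂ (sideOf a b)).card : ℝ) ≤
      2 * (holesIn n T₁ (sideOf a b)).card := by
    calc τ * ((badHolesIn n T₁ T₂ (sideOf a b)).card : ℝ)
        ≤ τ * (∑ q ∈ M, ((holesIn n T₁ (sideOf q.1 q.2)).card : ℝ)) := by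
          apply mul_le_mul_of_nonneg_left _ (le_of_lt hτ0)
          rw [← Nat.cast_sum]
          exact_mod_cast hB
      _ = ∑ q ∈ M, τ * ((holesIn n T₁ (sideOf q.1 q.2)).card : ℝ) := Finset.mul_sum _ _ _
      _ ≤ ∑ q ∈ M, (sideDegree n q.1 q.2 T₁ : ℝ) := Finset.sum_le_sum hC
      _ ≤ (sideDegree n a b T₁ : ℝ) := by
          rw [← Nat.cast_sum]
          exact_mod_cast hD1
      _ ≤ 2 * (holesIn n T₁ (sideOf a b)).card := by exact_mod_cast hE
  rw [div_mul_eq_mul_div, le_div_iff₀ hτ0, mul_comm]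
  linarith
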